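/- arXiv:1910.03363 — 2 statements merged into one kernel-verified Lean document; each statement's English description precedes it below -/
import Mathlib

section
/- Let D be a total dominating set of G, let i ∈ V with nonempty neighborhood N(i), let c assign nonnegative real weights to edges, and let j_1, …, j_m be the neighbors of i ordered so that c(i,j_1) ≤ … ≤ c(i,j_m). Define q_i = min_{j ∈ N(i) ∩ D} c(i,j) if i ∉ D and q_i = 0 if i ∈ D. Then for every k ∈ {1,…,m}: q_i ≥ c(i,j_k) − Σ_{k' < k} (c(i,j_k) − c(i,j_{k'}))·[j_{k'} ∈ D] − c(i,j_k)·[i ∈ D]. -/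
open Finset

/-- Benders optimality cut (EXTCOSTS-i): with `j 0, …, j (m-1)` the neighbors of `i`
ordered by nondecreasing edge weight `w`, and `q` the external cost of `i`
(the minimum weight to a `D`-neighbor if `i ∉ D`, and `0` if `i ∈ D`), the cut
`q ≥ w k − Σ_{k'<k} (w k − w k')·[j k' ∈ D] − w k·[i ∈ D]` holds for every `k`. -/
theorem benders_cut {V : Type} [Fintype V] [DecidableEq V]
    (G : SimpleGraph V) (D : Finset V)
    (hD : ∀ v : V, ∃ u ∈ D, G.Adj v u)
    (i : V) (m : ℕ) (j : Fin m → V)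
    (hinj : Function.Injective j)
    (hadj : ∀ k, G.Adj i (j k))
    (hsurj : ∀ v, G.Adj i v → ∃ k, j k = v)
    (w : Fin m → ℝ) (hw0 : ∀ k, 0 ≤ w k)
    (hmono : ∀ k k' : Fin m, k ≤ k' → w k ≤ w k')
    (q : ℝ)
    (hq : q = if i ∈ D then 0 else sInf {x : ℝ | ∃ k : Fin m, j k ∈ D ∧ w k = x}) :
    ∀ k : Fin m,
      q ≥ w k - (∑ k' ∈ Finset.univ.filter (fun k' : Fin m => k' < k),
          (w k - w k') * (if j k' ∈ D then 1 else 0))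
        - w k * (if i ∈ D then 1 else 0) := by
  intro k
  have hsum_nonneg : 0 ≤ ∑ k' ∈ Finset.univ.filter (fun k' : Fin m => k' < k),
      (w k - w k') * (if j k' ∈ D then 1 else 0) := by
    apply Finset.sum_nonneg
    intro k' hk'
    have hlt : k' < k := (Finset.mem_filter.mp hk').2
    have h1 := hmono k' k hlt.le
    have h2 : (0:ℝ) ≤ if j k' ∈ D then 1 else 0 := by positivity
    exact mul_nonneg (by linarith) h2
  by_cases hi : i ∈ D
  · simp only [hq, if_pos hi, mul_one, ge_iff_le]
    linarith
  · simp only [hq, if_neg hi, mul_zero, sub_zero, ge_iff_le]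
    apply le_csInf
    · obtain ⟨u, hu, hadj'⟩ := hD i
      obtain ⟨k0, rfl⟩ := hsurj u hadj'
      exact ⟨w k0, k0, hu, rfl⟩
    · rintro b ⟨k'', hk''D, rfl⟩
      rcases le_or_gt k k'' with h | h
      · have := hmono k k'' h
        linarith
      · have hmem : k'' ∈ Finset.univ.filter (fun k' : Fin m => k' < k) := by
          simp [h]
        have hsingle : (w k - w k'') * (if j k'' ∈ D then 1 else 0) ≤
            ∑ k' ∈ Finset.univ.filter (fun k' : Fin m => k' < k),
              (w k - w k') * (if j k' ∈ D then 1 else 0) := by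
          apply Finset.single_le_sum _ hmem
          intro k' hk'
          have hlt : k' < k := (Finset.mem_filter.mp hk').2
          have h1 := hmono k' k hlt.le
          have h2 : (0:ℝ) ≤ if j k' ∈ D then 1 else 0 := by positivity
          exact mul_nonneg (by linarith) h2
        rw [if_pos hk''D, mul_one] at hsingle
        linarith
end

section
/- With the setup of the Benders cuts: let D be a total dominating set, i ∈ V with neighbors j_1,…,j_m ordered by nondecreasing weight c(i,j_1) ≤ … ≤ c(i,j_m), q_i = min_{j ∈ N(i) ∩ D} c(i,j) if i ∉ D and q_i = 0 if i ∈ D, and define y(e) = 1 iff both endpoints of e lie in D. Then for every k: q_i ≥ c(i,j_k) − Σ_{k' < k} (c(i,j_k) − c(i,j_{k'}))·[j_{k'} ∈ D] − c(i,j_k)·[i ∈ D] + Σ_{k' < k} (c(i,j_k) − c(i,j_{k'}))·y({j_{k'}, i}). -/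
open Finset

/-- Lifted Benders cut (EXTCOSTS-i-L): with `y({j k', i}) = [j k' ∈ D]·[i ∈ D]`,
the lifted cut
`q ≥ w k − Σ_{k'<k} (w k − w k')·[j k' ∈ D] − w k·[i ∈ D] + Σ_{k'<k} (w k − w k')·y({j k', i})`
is valid. -/
theorem benders_cut_lifted {V : Type} [Fintype V] [DecidableEq V]
    (G : SimpleGraph V) (D : Finset V)
    (hD : ∀ v : V, ∃ u ∈ D, G.Adj v u)
    (i : V) (m : ℕ) (j : Fin m → V)
    (hinj : Function.Injective j)
    (hadj : ∀ k, G.Adj i (j k))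
    (hsurj : ∀ v, G.Adj i v → ∃ k, j k = v)
    (w : Fin m → ℝ) (hw0 : ∀ k, 0 ≤ w k)
    (hmono : ∀ k k' : Fin m, k ≤ k' → w k ≤ w k')
    (q : ℝ)
    (hq : q = if i ∈ D then 0 else sInf {x : ℝ | ∃ k : Fin m, j k ∈ D ∧ w k = x}) :
    ∀ k : Fin m,
      q ≥ w k - (∑ k' ∈ Finset.univ.filter (fun k' : Fin m => k' < k),
          (w k - w k') * (if j k' ∈ D then 1 else 0))
        - w k * (if i ∈ D then 1 else 0)
        + (∑ k' ∈ Finset.univ.filter (fun k' : Fin m => k' < k),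
          (w k - w k') * (if j k' ∈ D ∧ i ∈ D then 1 else 0)) := by
  intro k
  by_cases hiD : i ∈ D
  · simp only [hiD, if_true, and_true, mul_one]
    rw [hq, if_pos hiD]
    linarith
  · simp only [hiD, if_false, and_false, mul_zero, Finset.sum_const_zero, add_zero, sub_zero]
    rw [hq, if_neg hiD]
    obtain ⟨u, huD, hadj'⟩ := hD i
    obtain ⟨k0, hk0⟩ := hsurj u hadj'
    set S : Finset (Fin m) := Finset.univ.filter (fun k' => j k' ∈ D) with hS
    have hk0S : k0 ∈ S := by simp [hS, hk0, huD]
    have hne : S.Nonempty := ⟨k0, hk0S⟩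
    have hne' : (S.image w).Nonempty := hne.image w
    have hset : {x : ℝ | ∃ k : Fin m, j k ∈ D ∧ w k = x} = ↑(S.image w) := by
      ext x
      simp [hS, and_comm, eq_comm]
    rw [hset, hne'.csInf_eq_min']
    obtain ⟨kstar, hkstarS, hqeq⟩ := Finset.mem_image.mp ((S.image w).min'_mem hne')
    have hkstarD : j kstar ∈ D := by simpa [hS] using hkstarS
    have hnn : ∀ x ∈ Finset.univ.filter (fun k' : Fin m => k' < k),
        0 ≤ (w k - w x) * (if j x ∈ D then 1 else 0) := by
      intro x hx
      simp only [Finset.mem_filter] at hx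
      have h1 : w x ≤ w k := hmono x k (le_of_lt hx.2)
      have h2 : (0:ℝ) ≤ (if j x ∈ D then (1:ℝ) else 0) := by positivity
      exact mul_nonneg (by linarith) h2
    rw [← hqeq]
    by_cases hlt : kstar < k
    · have h2 : (w k - w kstar) * (if j kstar ∈ D then 1 else 0) ≤
          ∑ k'' ∈ Finset.univ.filter (fun k'' : Fin m => k'' < k),
            (w k - w k'') * (if j k'' ∈ D then 1 else 0) := by
        apply Finset.single_le_sum hnn
        simp [hlt]
      rw [if_pos hkstarD, mul_one] at h2
      linarith
    · have hsum : (0:ℝ) ≤ ∑ k'' ∈ Finset.univ.filter (fun k'' : Fin m => k'' < k),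
          (w k - w k'') * (if j k'' ∈ D then 1 else 0) := Finset.sum_nonneg hnn
      have : w k ≤ w kstar := hmono k kstar (le_of_not_gt hlt)
      linarith
end
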